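/- arXiv:1210.2561 — 2 statements merged into one kernel-verified Lean document; each statement's English description precedes it below -/
import Mathlib

section
/- In any model category, given a zig-zag of weak equivalences A ← D₁ → D₂ ← ⋯ → B in which every object is fibrant, there exists a cofibrant object X and weak equivalences X → A and X → B. -/
/-! Replace `A` cofibrantly by `p : X ⟶ A` and walk along the zig-zag keeping a weak
equivalence `X ⟶ Dₖ`. Forward arrows are composed on. A backward weak equivalence
`e : D' ⟶ D` with `D'` fibrant is crossed by factoring `e` as an acyclic cofibration `i`
followed by a fibration `q`: `q` is an acyclic fibration, so `X ⟶ D` lifts through it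
because `X` is cofibrant, and `i` has a retraction because `D'` is fibrant. -/

open CategoryTheory Limits

universe v u

/-- A model structure on a category `C`: classes of weak equivalences, fibrations and
cofibrations satisfying the usual axioms (two-out-of-three, lifting, factorization). -/
structure ModelStructure (C : Type u) [Category.{v} C] where
  /-- weak equivalences -/
  W : MorphismProperty C
  /-- fibrations -/
  Fib : MorphismProperty C
  /-- cofibrations -/
  Cof : MorphismProperty C
  W_of_iso : ∀ {X Y : C} (f : X ⟶ Y), IsIso f → W f
  W_comp : ∀ {X Y Z : C} (f : X ⟶ Y) (g : Y ⟶ Z), W f → W g → W (f ≫ g)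
  W_of_comp_left : ∀ {X Y Z : C} (f : X ⟶ Y) (g : Y ⟶ Z), W g → W (f ≫ g) → W f
  W_of_comp_right : ∀ {X Y Z : C} (f : X ⟶ Y) (g : Y ⟶ Z), W f → W (f ≫ g) → W g
  /-- factorization as a cofibration followed by an acyclic fibration -/
  factor_cof_afib : ∀ {X Y : C} (f : X ⟶ Y), ∃ (Z : C) (i : X ⟶ Z) (p : Z ⟶ Y),
      Cof i ∧ Fib p ∧ W p ∧ i ≫ p = f
  /-- factorization as an acyclic cofibration followed by a fibration -/
  factor_acof_fib : ∀ {X Y : C} (f : X ⟶ Y), ∃ (Z : C) (i : X ⟶ Z) (p : Z ⟶ Y),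
      Cof i ∧ W i ∧ Fib p ∧ i ≫ p = f
  /-- lifting axiom -/
  lift : ∀ {A B X Y : C} (i : A ⟶ B) (p : X ⟶ Y) (f : A ⟶ X) (g : B ⟶ Y),
      Cof i → Fib p → (W i ∨ W p) → i ≫ g = f ≫ p →
      ∃ h : B ⟶ X, i ≫ h = f ∧ h ≫ p = g

variable {C : Type u} [Category.{v} C]

/-- An object is cofibrant if the map from the initial object is a cofibration. -/
def ModelStructure.Cofibrant [HasInitial C] (M : ModelStructure C) (X : C) : Prop :=
  M.Cof (initial.to X)

/-- An object is fibrant if the map to the terminal object is a fibration. -/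
def ModelStructure.Fibrant [HasTerminal C] (M : ModelStructure C) (X : C) : Prop :=
  M.Fib (terminal.from X)

namespace ModelStructure

variable (M : ModelStructure C)

theorem exists_cofibrant_replacement [HasInitial C] (Y : C) :
    ∃ X : C, M.Cofibrant X ∧ ∃ p : X ⟶ Y, M.W p := by
  obtain ⟨X, i, p, hi, -, hp, -⟩ := M.factor_cof_afib (initial.to Y)
  refine ⟨X, ?_, p, hp⟩
  rwa [Cofibrant, Subsingleton.elim (initial.to X) i]

theorem exists_lift_of_cofibrant [HasInitial C] {X Z Y : C} (hX : M.Cofibrant X)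
    (f : X ⟶ Y) (p : Z ⟶ Y) (hp : M.Fib p) (hpW : M.W p) :
    ∃ h : X ⟶ Z, h ≫ p = f := by
  obtain ⟨h, -, hh⟩ := M.lift (initial.to X) p (initial.to Z) f hX hp (Or.inr hpW)
    (Subsingleton.elim _ _)
  exact ⟨h, hh⟩

theorem exists_retraction_of_fibrant [HasTerminal C] {B Z : C} (hB : M.Fibrant B)
    (i : B ⟶ Z) (hi : M.Cof i) (hiW : M.W i) :
    ∃ r : Z ⟶ B, i ≫ r = 𝟙 B ∧ M.W r := by
  obtain ⟨r, hir, -⟩ := M.lift i (terminal.from B) (𝟙 B) (terminal.from Z) hi hB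
    (Or.inl hiW) (Subsingleton.elim _ _)
  refine ⟨r, hir, M.W_of_comp_right i r hiW ?_⟩
  rw [hir]
  exact M.W_of_iso _ inferInstance

theorem exists_W_of_cofibrant_of_fibrant [HasInitial C] [HasTerminal C] {X A B : C}
    (hX : M.Cofibrant X) (hB : M.Fibrant B) (f : X ⟶ A) (hf : M.W f)
    (e : B ⟶ A) (he : M.W e) : ∃ g : X ⟶ B, M.W g := by
  obtain ⟨Z, i, q, hi, hiW, hq, rfl⟩ := M.factor_acof_fib e
  have hqW : M.W q := M.W_of_comp_right i q hiW he
  obtain ⟨h, rfl⟩ := M.exists_lift_of_cofibrant hX f q hq hqW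
  have hhW : M.W h := M.W_of_comp_left h q hqW hf
  obtain ⟨r, -, hrW⟩ := M.exists_retraction_of_fibrant hB i hi hiW
  exact ⟨h ≫ r, M.W_comp h r hhW hrW⟩

end ModelStructure

/-- given a zig-zag of weak equivalences `A ← D₁ → D₂ ← ⋯ → B` in which
every object is fibrant, there exists a cofibrant object `X` with weak equivalences
`X ⟶ A` and `X ⟶ B`. Here the zig-zag is encoded by a sequence of objects
`obj : Fin (n+1) → C` with `A = obj 0`, `B = obj (Fin.last n)`, consecutive objects
being connected by a weak equivalence in one of the two directions. -/
theorem stmt_1 [HasInitial C] [HasTerminal C] (M : ModelStructure C)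
    (n : ℕ) (obj : Fin (n + 1) → C)
    (hfib : ∀ i, M.Fibrant (obj i))
    (hzig : ∀ i : Fin n,
      (∃ f : obj i.castSucc ⟶ obj i.succ, M.W f) ∨
      (∃ f : obj i.succ ⟶ obj i.castSucc, M.W f)) :
    ∃ X : C, M.Cofibrant X ∧ (∃ f : X ⟶ obj 0, M.W f) ∧
      (∃ g : X ⟶ obj (Fin.last n), M.W g) := by
  obtain ⟨X, hX, hX₀⟩ := M.exists_cofibrant_replacement (obj 0)
  have hW : ∀ k, ∃ g : X ⟶ obj k, M.W g := by
    intro k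
    induction k using Fin.induction with
    | zero => exact hX₀
    | succ i ih =>
      obtain ⟨g, hg⟩ := ih
      rcases hzig i with ⟨e, he⟩ | ⟨e, he⟩
      · exact ⟨g ≫ e, M.W_comp g e hg he⟩
      · exact M.exists_W_of_cofibrant_of_fibrant hX (hfib i.succ) g hg e he
  exact ⟨X, hX, hW 0, hW (Fin.last n)⟩
end

section
/- Let C be a model category in which the pushout of a weak equivalence along a cofibration between suitably cofibrant objects is a weak equivalence (relative left properness). Given a commutative diagram of operad maps where η : A → O factors as an acyclic-type map, a weak equivalence σ : A → As with A cofibrant, and weak equivalences f₁ : O → M₁ and f₂ : O → M₂ compatible with multiplications α₁ : As → M₁ and α₂ : As → M₂, there exists an object Õ with a map η̃ : As → Õ and weak equivalences f̃₁ : Õ → M₁ and f̃₂ : Õ → M₂ satisfying f̃ᵢ ∘ η̃ = αᵢ for i = 1, 2. -/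
open CategoryTheory Limits

universe v u

variable {C : Type u} [Category.{v} C]

/-! Factor `η` as a cofibration `i : A ⟶ Y` followed by an acyclic fibration `p` and take
`Obar = As ⊔_A Y`. Relative left properness makes `Y ⟶ Obar` a weak equivalence, so the maps
`Obar ⟶ Mᵢ` induced by `αᵢ` and `p ≫ fᵢ` are weak equivalences by two-out-of-three. -/

namespace ModelStructure

variable [HasPushouts C] (M : ModelStructure C)

theorem W_pushout_desc_of_W_inr {X Y Z N : C} {f : X ⟶ Y} {g : X ⟶ Z}
    (hinr : M.W (pushout.inr f g)) (a : Y ⟶ N) {b : Z ⟶ N} (hb : M.W b)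
    (w : f ≫ a = g ≫ b) : M.W (pushout.desc a b w) :=
  M.W_of_comp_right _ _ hinr (by rwa [pushout.inr_desc])

end ModelStructure

/-- Let `C` be a model category satisfying relative left properness:
the pushout of a weak equivalence along a cofibration between cofibrant objects is a
weak equivalence.  Given `η : A ⟶ O`, a weak equivalence `σ : A ⟶ As` with `A`
cofibrant (and `As` cofibrant, as the associative operad is), weak equivalences
`f₁ : O ⟶ M₁`, `f₂ : O ⟶ M₂` compatible with the multiplications `α₁ : As ⟶ M₁`,
`α₂ : As ⟶ M₂` (i.e. `η ≫ fᵢ = σ ≫ αᵢ`), there exist an object `Obar`, a map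
`η̃ : As ⟶ Obar` and weak equivalences `f̃₁ : Obar ⟶ M₁`, `f̃₂ : Obar ⟶ M₂` with
`η̃ ≫ f̃ᵢ = αᵢ` for `i = 1, 2`. -/
theorem stmt_14 [HasInitial C] [HasPushouts C] (M : ModelStructure C)
    (hproper : ∀ {P Q R : C} (w : P ⟶ Q) (c : P ⟶ R),
      M.W w → M.Cof c → M.Cofibrant P → M.Cofibrant Q → M.W (pushout.inr w c))
    (A As O M₁ M₂ : C)
    (η : A ⟶ O) (σ : A ⟶ As) (hσ : M.W σ)
    (hAcof : M.Cofibrant A) (hAscof : M.Cofibrant As)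
    (f₁ : O ⟶ M₁) (f₂ : O ⟶ M₂) (hf₁ : M.W f₁) (hf₂ : M.W f₂)
    (α₁ : As ⟶ M₁) (α₂ : As ⟶ M₂)
    (hsq₁ : η ≫ f₁ = σ ≫ α₁) (hsq₂ : η ≫ f₂ = σ ≫ α₂) :
    ∃ (Obar : C) (η' : As ⟶ Obar) (g₁ : Obar ⟶ M₁) (g₂ : Obar ⟶ M₂),
      M.W g₁ ∧ M.W g₂ ∧ η' ≫ g₁ = α₁ ∧ η' ≫ g₂ = α₂ := by
  obtain ⟨Y, i, p, hi, -, hp, rfl⟩ := M.factor_cof_afib η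
  have hinr : M.W (pushout.inr σ i) := hproper σ i hσ hi hAcof hAscof
  have w₁ : σ ≫ α₁ = i ≫ p ≫ f₁ := by rw [← hsq₁, Category.assoc]
  have w₂ : σ ≫ α₂ = i ≫ p ≫ f₂ := by rw [← hsq₂, Category.assoc]
  exact ⟨pushout σ i, pushout.inl σ i, pushout.desc α₁ (p ≫ f₁) w₁, pushout.desc α₂ (p ≫ f₂) w₂,
    M.W_pushout_desc_of_W_inr hinr α₁ (M.W_comp _ _ hp hf₁) w₁,
    M.W_pushout_desc_of_W_inr hinr α₂ (M.W_comp _ _ hp hf₂) w₂,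
    pushout.inl_desc _ _ _, pushout.inl_desc _ _ _⟩
end
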